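/- (Approximation ratio K·w_max/w_min) Let J = {1,…,n} be jobs, K ≥ 1 scenarios, and for each j ∈ J, i ∈ {1,…,K} let p_j(S_i) ≥ 0 and w_j(S_i) > 0 be given; set w_max = max_{j,i} w_j(S_i) and w_min = min_{j,i} w_j(S_i). Let Π be a nonempty set of permutations of J (feasible schedules). For π ∈ Π and i ∈ {1,…,K}, the completion time of job j is C_j(π,S_i) = Σ_{k∈pred(π,j)} p_k(S_i), where pred(π,j) consists of j and all jobs preceding j in π, and the cost is f(π,S_i) = Σ_{j∈J} w_j(S_i) C_j(π,S_i). Let v = (v_1,…,v_K) satisfy v_i ∈ [0,1], v_1 + … + v_K = 1 and v_1 ≥ v_2 ≥ … ≥ v_K, and set OWA(π) = owa_v(f(π,S_1),…,f(π,S_K)). Define ŵ_j = owa_v(w_j(S_1),…,w_j(S_K)), Ĉ_j(π) = Σ_{i=1}^K C_j(π,S_i) and f̂(π) = Σ_{j∈J} ŵ_j Ĉ_j(π). If π̂ ∈ Π minimizes f̂ over Π, then for every π ∈ Π it holds OWA(π̂) ≤ K · (w_max/w_min) · OWA(π). -/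

import Mathlib

/-!
For nonnegative `f` and nonincreasing `v`, sorting makes `owa v f` lie between `v₁ · max f`
and `v₁ · Σ f`, and Chebyshev's sum inequality (both `v` and the sorted `f` are nonincreasing)
gives `Σ f ≤ K · owa v f`. Hence
`OWA(π̂) ≤ v₁ Σᵢ f(π̂,Sᵢ) ≤ f̂(π̂) ≤ f̂(π) ≤ (w_max/w_min) Σᵢ f(π,Sᵢ) ≤ K (w_max/w_min) OWA(π)`,
where the two middle estimates compare `ŵ_j` with `v₁ w_j(Sᵢ)` from below and with `w_max`
from above.
-/

/-- The permutation sorting a vector `f` in nonincreasing order. -/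
noncomputable def sortDesc {K : ℕ} (f : Fin K → ℝ) : Equiv.Perm (Fin K) :=
  Tuple.sort (fun j => -f j)

noncomputable def owa {K : ℕ} (v f : Fin K → ℝ) : ℝ :=
  ∑ i : Fin K, v i * f (sortDesc f i)

/-- Completion time of job `j` in schedule `π` (where `π r` is the job at position `r`)
under scenario `i`: the sum of processing times of `j` and all jobs preceding `j`. -/
noncomputable def compl {n K : ℕ} (p : Fin n → Fin K → ℝ)
    (π : Equiv.Perm (Fin n)) (j : Fin n) (i : Fin K) : ℝ :=
  ∑ k ∈ Finset.univ.filter (fun k => π.symm k ≤ π.symm j), p k i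

noncomputable def cost {n K : ℕ} (p w : Fin n → Fin K → ℝ)
    (π : Equiv.Perm (Fin n)) (i : Fin K) : ℝ :=
  ∑ j : Fin n, w j i * compl p π j i

/-- The surrogate objective `f̂(π) = Σ_j ŵ_j Ĉ_j(π)` with `ŵ_j = owa_v(w_j(S_1),…)` and
`Ĉ_j(π) = Σ_i C_j(π,S_i)`. -/
noncomputable def fhat {n K : ℕ} (v : Fin K → ℝ) (p w : Fin n → Fin K → ℝ)
    (π : Equiv.Perm (Fin n)) : ℝ :=
  ∑ j : Fin n, owa v (fun i => w j i) * ∑ i : Fin K, compl p π j i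

section OWA

variable {K : ℕ} {v f : Fin K → ℝ}

theorem antitone_comp_sortDesc (f : Fin K → ℝ) : Antitone (f ∘ sortDesc f) := fun _ _ hij => by
  simpa [sortDesc] using Tuple.monotone_sort (fun j => -f j) hij

theorem sum_comp_sortDesc (f : Fin K → ℝ) : ∑ i, f (sortDesc f i) = ∑ i, f i :=
  Equiv.sum_comp (sortDesc f) f

theorem mul_le_owa (hK : 0 < K) (hv : ∀ i, 0 ≤ v i) (hf : ∀ i, 0 ≤ f i) (i₀ : Fin K) :
    v ⟨0, hK⟩ * f i₀ ≤ owa v f := by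
  have hmax : f i₀ ≤ f (sortDesc f ⟨0, hK⟩) := by
    simpa using antitone_comp_sortDesc f
      (show (⟨0, hK⟩ : Fin K) ≤ (sortDesc f).symm i₀ from Nat.zero_le _)
  calc v ⟨0, hK⟩ * f i₀ ≤ v ⟨0, hK⟩ * f (sortDesc f ⟨0, hK⟩) :=
        mul_le_mul_of_nonneg_left hmax (hv _)
    _ ≤ owa v f :=
        Finset.single_le_sum (f := fun i => v i * f (sortDesc f i))
          (fun i _ => mul_nonneg (hv i) (hf _)) (Finset.mem_univ _)

theorem owa_le_mul_sum (hK : 0 < K) (hv : Antitone v) (hf : ∀ i, 0 ≤ f i) :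
    owa v f ≤ v ⟨0, hK⟩ * ∑ i, f i := by
  rw [← sum_comp_sortDesc, Finset.mul_sum]
  exact Finset.sum_le_sum fun i _ =>
    mul_le_mul_of_nonneg_right (hv (Nat.zero_le i)) (hf _)

theorem owa_le_of_forall_le {M : ℝ} (hv : ∀ i, 0 ≤ v i) (hsum : ∑ i, v i = 1)
    (hf : ∀ i, f i ≤ M) : owa v f ≤ M :=
  calc owa v f ≤ ∑ i, v i * M :=
        Finset.sum_le_sum fun i _ => mul_le_mul_of_nonneg_left (hf _) (hv i)
    _ = M := by rw [← Finset.sum_mul, hsum, one_mul]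

theorem sum_le_card_mul_owa (hsum : ∑ i, v i = 1) (hv : Antitone v) :
    ∑ i, f i ≤ K * owa v f := by
  have := (hv.monovary (antitone_comp_sortDesc f)).sum_mul_sum_le_card_mul_sum
  rw [hsum, one_mul] at this
  simpa [owa, sum_comp_sortDesc f] using this

end OWA

section Scheduling

variable {n K : ℕ} {p w : Fin n → Fin K → ℝ} {v : Fin K → ℝ} {σ : Equiv.Perm (Fin n)}

theorem compl_nonneg (hp : ∀ j i, 0 ≤ p j i) (σ : Equiv.Perm (Fin n)) (j : Fin n) (i : Fin K) :
    0 ≤ compl p σ j i :=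
  Finset.sum_nonneg fun k _ => hp k i

theorem cost_nonneg (hp : ∀ j i, 0 ≤ p j i) (hw : ∀ j i, 0 ≤ w j i) (σ : Equiv.Perm (Fin n))
    (i : Fin K) : 0 ≤ cost p w σ i :=
  Finset.sum_nonneg fun j _ => mul_nonneg (hw j i) (compl_nonneg hp σ j i)

theorem mul_sum_cost_eq (c : ℝ) (σ : Equiv.Perm (Fin n)) :
    c * ∑ i, cost p w σ i = ∑ j, ∑ i, c * w j i * compl p σ j i := by
  simp only [cost, Finset.mul_sum, mul_assoc]
  exact Finset.sum_comm

theorem fhat_eq (σ : Equiv.Perm (Fin n)) :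
    fhat v p w σ = ∑ j, ∑ i, owa v (fun i => w j i) * compl p σ j i := by
  simp only [fhat, Finset.mul_sum]

theorem mul_sum_cost_le_fhat (hp : ∀ j i, 0 ≤ p j i) {c : ℝ}
    (hc : ∀ j i, c * w j i ≤ owa v (fun i => w j i)) :
    c * ∑ i, cost p w σ i ≤ fhat v p w σ := by
  rw [mul_sum_cost_eq, fhat_eq]
  exact Finset.sum_le_sum fun j _ => Finset.sum_le_sum fun i _ =>
    mul_le_mul_of_nonneg_right (hc j i) (compl_nonneg hp σ j i)

theorem fhat_le_mul_sum_cost (hp : ∀ j i, 0 ≤ p j i) {c : ℝ}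
    (hc : ∀ j i, owa v (fun i => w j i) ≤ c * w j i) :
    fhat v p w σ ≤ c * ∑ i, cost p w σ i := by
  rw [mul_sum_cost_eq, fhat_eq]
  exact Finset.sum_le_sum fun j _ => Finset.sum_le_sum fun i _ =>
    mul_le_mul_of_nonneg_right (hc j i) (compl_nonneg hp σ j i)

end Scheduling

theorem owa_wsct_approx_general (n K : ℕ) (hn : 0 < n) (hK : 0 < K)
    (p w : Fin n → Fin K → ℝ)
    (hp : ∀ j i, 0 ≤ p j i) (hw : ∀ j i, 0 < w j i)
    (Scheds : Set (Equiv.Perm (Fin n)))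
    (v : Fin K → ℝ) (hv : ∀ i, v i ∈ Set.Icc (0 : ℝ) 1)
    (hsum : ∑ i : Fin K, v i = 1)
    (hmono : ∀ i j : Fin K, i ≤ j → v j ≤ v i)
    (πhat : Equiv.Perm (Fin n))
    (hmin : ∀ π ∈ Scheds, fhat v p w πhat ≤ fhat v p w π)
    (π : Equiv.Perm (Fin n)) (hπ : π ∈ Scheds) :
    owa v (cost p w πhat) ≤
      (K : ℝ) *
        ((Finset.univ.sup' (⟨(⟨0, hn⟩, ⟨0, hK⟩), Finset.mem_univ _⟩ :
            (Finset.univ : Finset (Fin n × Fin K)).Nonempty)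
            (fun q : Fin n × Fin K => w q.1 q.2)) /
         (Finset.univ.inf' (⟨(⟨0, hn⟩, ⟨0, hK⟩), Finset.mem_univ _⟩ :
            (Finset.univ : Finset (Fin n × Fin K)).Nonempty)
            (fun q : Fin n × Fin K => w q.1 q.2))) *
      owa v (cost p w π) := by
  have hne : (Finset.univ : Finset (Fin n × Fin K)).Nonempty :=
    Finset.univ_nonempty_iff.2 ⟨(⟨0, hn⟩, ⟨0, hK⟩)⟩
  set W := Finset.univ.sup' hne (fun q : Fin n × Fin K => w q.1 q.2)
  set m := Finset.univ.inf' hne (fun q : Fin n × Fin K => w q.1 q.2)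
  have hwW : ∀ j i, w j i ≤ W := fun j i => Finset.le_sup' (fun q : Fin n × Fin K => w q.1 q.2) (Finset.mem_univ (j, i))
  have hmw : ∀ j i, m ≤ w j i := fun j i => Finset.inf'_le (fun q : Fin n × Fin K => w q.1 q.2) (Finset.mem_univ (j, i))
  have hm : 0 < m := (Finset.lt_inf'_iff _).2 fun q _ => hw q.1 q.2
  have hv0 : ∀ i, 0 ≤ v i := fun i => (hv i).1
  have hwhat_le : ∀ j i, owa v (fun i => w j i) ≤ W / m * w j i := fun j i =>
    calc owa v (fun i => w j i) ≤ W := owa_le_of_forall_le hv0 hsum (hwW j)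
      _ = W / m * m := (div_mul_cancel₀ W hm.ne').symm
      _ ≤ W / m * w j i := by
        gcongr
        · exact div_nonneg ((hw j i).le.trans (hwW j i)) hm.le
        · exact hmw j i
  calc owa v (cost p w πhat) ≤ v ⟨0, hK⟩ * ∑ i, cost p w πhat i :=
        owa_le_mul_sum hK hmono (cost_nonneg hp (fun j i => (hw j i).le) πhat)
    _ ≤ fhat v p w πhat :=
        mul_sum_cost_le_fhat hp fun j i => mul_le_owa hK hv0 (fun i => (hw j i).le) i
    _ ≤ fhat v p w π := hmin π hπ
    _ ≤ W / m * ∑ i, cost p w π i := fhat_le_mul_sum_cost hp hwhat_le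
    _ ≤ W / m * (K * owa v (cost p w π)) := by
        gcongr
        · exact div_nonneg ((hw ⟨0, hn⟩ ⟨0, hK⟩).le.trans (hwW _ _)) hm.le
        · exact sum_le_card_mul_owa hsum hmono
    _ = K * (W / m) * owa v (cost p w π) := by ring

/-- with nonincreasing OWA weights, a minimizer π̂ of the surrogate
objective f̂ over the nonempty set Scheds of feasible schedules satisfies
OWA(π̂) ≤ K·(w_max/w_min)·OWA(π) for every π ∈ Scheds. -/
theorem owa_wsct_approx (n K : ℕ) (hn : 0 < n) (hK : 0 < K)
    (p w : Fin n → Fin K → ℝ)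
    (hp : ∀ j i, 0 ≤ p j i) (hw : ∀ j i, 0 < w j i)
    (Scheds : Set (Equiv.Perm (Fin n))) (hScheds : Scheds.Nonempty)
    (v : Fin K → ℝ) (hv : ∀ i, v i ∈ Set.Icc (0 : ℝ) 1)
    (hsum : ∑ i : Fin K, v i = 1)
    (hmono : ∀ i j : Fin K, i ≤ j → v j ≤ v i)
    (πhat : Equiv.Perm (Fin n)) (hπhat : πhat ∈ Scheds)
    (hmin : ∀ π ∈ Scheds, fhat v p w πhat ≤ fhat v p w π)
    (π : Equiv.Perm (Fin n)) (hπ : π ∈ Scheds) :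
    owa v (cost p w πhat) ≤
      (K : ℝ) *
        ((Finset.univ.sup' (⟨(⟨0, hn⟩, ⟨0, hK⟩), Finset.mem_univ _⟩ :
            (Finset.univ : Finset (Fin n × Fin K)).Nonempty)
            (fun q : Fin n × Fin K => w q.1 q.2)) /
         (Finset.univ.inf' (⟨(⟨0, hn⟩, ⟨0, hK⟩), Finset.mem_univ _⟩ :
            (Finset.univ : Finset (Fin n × Fin K)).Nonempty)
            (fun q : Fin n × Fin K => w q.1 q.2))) *
      owa v (cost p w π) :=
  owa_wsct_approx_general n K hn hK p w hp hw Scheds v hv hsum hmono πhat hmin π hπ
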